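/- Let P be a finite bounded poset. Then P is a lattice if and only if (Q(P), ⊥) is a Dacey space, i.e., every orthoclosed subset X of Q(P) satisfies X = B^⊥⊥ for every maximal pairwise orthogonal subset B of X. Equivalently, P is a lattice iff the complete ortholattice of orthoclosed subsets of Q(P) is orthomodular. -/

import Mathlib

/-- The polar (orthocomplement) of a subset: all elements orthogonal to every element of `X`. -/
def pol {O : Type*} (r : O → O → Prop) (X : Set O) : Set O := {y | ∀ x ∈ X, r y x}

/-- A set is orthoclosed if it equals its double polar. -/
def IsOC {O : Type*} (r : O → O → Prop) (X : Set O) : Prop := pol r (pol r X) = X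

/-- A basis of `X`: a maximal pairwise orthogonal subset of `X`. -/
def IsBasis {O : Type*} (r : O → O → Prop) (X B : Set O) : Prop :=
  B ⊆ X ∧ B.Pairwise r ∧ ∀ C : Set O, B ⊆ C → C ⊆ X → C.Pairwise r → C = B

/-- A Dacey set: orthoclosed and recovered as the double polar of each of its bases. -/
def IsDacey {O : Type*} (r : O → O → Prop) (X : Set O) : Prop :=
  IsOC r X ∧ ∀ B : Set O, IsBasis r X B → pol r (pol r B) = X
/-- The proper quotients of a poset `P`: pairs `(a,b)` with `a < b`. -/
abbrev Quot1 (P : Type*) [PartialOrder P] : Type _ := {p : P × P // p.1 < p.2}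

/-- `[a<b] ⊥ [c<d]` iff `b ≤ c` or `d ≤ a`. -/
def perpQ {P : Type*} [PartialOrder P] (q₁ q₂ : Quot1 P) : Prop :=
  q₁.1.2 ≤ q₂.1.1 ∨ q₂.1.2 ≤ q₁.1.1

/-- The partial order on proper quotients: `[u<v] ≤ [a<b]` iff `a ≤ u` and `v ≤ b`. -/
def leQ {P : Type*} [PartialOrder P] (q₁ q₂ : Quot1 P) : Prop :=
  q₂.1.1 ≤ q₁.1.1 ∧ q₁.1.2 ≤ q₂.1.2

/-- `τ(U)`: quotients whose top endpoint lies in `U`. -/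
def tau {P : Type*} [PartialOrder P] (U : Set P) : Set (Quot1 P) := {q | q.1.2 ∈ U}

/-- `β(U)`: quotients whose bottom endpoint lies in `U`. -/
def beta {P : Type*} [PartialOrder P] (U : Set P) : Set (Quot1 P) := {q | q.1.1 ∈ U}

/-!
If `P` is a lattice, an orthoclosed set `X` of quotients is closed under subquotients and
contains the join `[a ⊓ c < b ⊔ d]` of any two non-orthogonal members `[a<b]`, `[c<d]`. So every
`x ∈ X` lies in a maximal block `m ∈ X`, and each member of `X` is inside `m` or orthogonal to it.
Let `B` be a basis of `X` and `q ⊥ B`. If `q` were not orthogonal to `m`, the gap between the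
members of `B` inside `m` lying below `q` and those lying above `q` would be a subquotient of `m`
orthogonal to all of `B`, against the maximality of `B`. Hence `B^⊥ = X^⊥`, i.e. `B^⊥⊥ = X`.

Conversely, if `a, b` have no join, let `L` be the lower bounds of the upper bounds of `{a, b}`.
Then `τ(L)` is orthoclosed, and for a basis `B` of it the largest top `t` of a member of `B` lies
in `L`, so `t` is not an upper bound of `{a, b}`, while `[t<⊤] ∈ B^⊥ = τ(L)^⊥` forces `a, b ≤ t`.
Meets are joins in `Pᵒᵈ`, and `[a<b] ↦ [b<a]` identifies `Q(P)` with `Q(Pᵒᵈ)`.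

In a finite orthogonality space, Dacey implies orthomodular by extending a basis of `X` to one
of `Y ⊇ X`; orthomodular implies Dacey by applying the law to `B^⊥⊥ ⊆ X`, as `X ∩ B^⊥ = ∅`.
-/

open Set OrderDual

def IsDaceySpace {O : Type*} (r : O → O → Prop) : Prop :=
  ∀ X : Set O, IsOC r X → ∀ B : Set O, IsBasis r X B → pol r (pol r B) = X

/-- The orthomodular law `Y = X ∨ (Y ∧ X^⊥)` for orthoclosed `X ≤ Y`. -/
def IsOrthomodularSpace {O : Type*} (r : O → O → Prop) : Prop :=
  ∀ X Y : Set O, IsOC r X → IsOC r Y → X ⊆ Y → Y = pol r (pol r X ∩ pol r (Y ∩ pol r X))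

section OrthogonalitySpace

variable {O : Type*} {r : O → O → Prop}

theorem pol_antitone {X Y : Set O} (h : X ⊆ Y) : pol r Y ⊆ pol r X :=
  fun _ hy x hx => hy x (h hx)

theorem pol_pol_mono {X Y : Set O} (h : X ⊆ Y) : pol r (pol r X) ⊆ pol r (pol r Y) :=
  pol_antitone (pol_antitone h)

theorem pol_empty : pol r (∅ : Set O) = univ := by
  ext; simp [pol]

theorem pol_union (X Y : Set O) : pol r (X ∪ Y) = pol r X ∩ pol r Y := by
  ext; simp [pol, or_imp, forall_and]

theorem subset_pol_pol [Std.Symm r] (X : Set O) : X ⊆ pol r (pol r X) :=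
  fun x hx _ hy => symm (hy x hx)

theorem pol_pol_pol [Std.Symm r] (X : Set O) : pol r (pol r (pol r X)) = pol r X :=
  (pol_antitone (subset_pol_pol X)).antisymm (subset_pol_pol _)

theorem exists_isBasis_superset [Finite O] {Y B₀ : Set O} (h₀ : B₀ ⊆ Y) (hp : B₀.Pairwise r) :
    ∃ B, B₀ ⊆ B ∧ IsBasis r Y B := by
  obtain ⟨B, ⟨hB₀, hBY, hBp⟩, hmax⟩ :=
    (toFinite {C : Set O | B₀ ⊆ C ∧ C ⊆ Y ∧ C.Pairwise r}).exists_maximal ⟨B₀, subset_rfl, h₀, hp⟩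
  exact ⟨B, hB₀, hBY, hBp, fun C hBC hCY hCp =>
    (hmax ⟨hB₀.trans hBC, hCY, hCp⟩ hBC).antisymm hBC⟩

theorem IsBasis.inter_pol_eq_empty [Std.Symm r] [Std.Irrefl r] {Y B : Set O}
    (hB : IsBasis r Y B) : Y ∩ pol r B = ∅ := by
  refine eq_empty_iff_forall_notMem.2 fun q ⟨hqY, hq⟩ => ?_
  have hqB : q ∉ B := fun h => irrefl q (hq q h)
  have hins : insert q B = B := hB.2.2 _ (subset_insert _ _) (insert_subset hqY hB.1)
    (hB.2.1.insert fun b hb _ => ⟨hq b hb, symm (hq b hb)⟩)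
  exact hqB (hins ▸ mem_insert q B)

theorem IsDaceySpace.pol_basis_eq [Std.Symm r] (h : IsDaceySpace r) {X B : Set O} (hX : IsOC r X)
    (hB : IsBasis r X B) : pol r B = pol r X := by
  rw [← h X hX B hB, pol_pol_pol]

theorem IsDaceySpace.isOrthomodularSpace [Finite O] [Std.Symm r] (h : IsDaceySpace r) :
    IsOrthomodularSpace r := by
  intro X Y hX hY hXY
  obtain ⟨B, -, hB⟩ := exists_isBasis_superset (r := r) (empty_subset X) (pairwise_empty _)
  obtain ⟨D, hBD, hD⟩ := exists_isBasis_superset (hB.1.trans hXY) hB.2.1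
  have hDsub : D ⊆ X ∪ (Y ∩ pol r X) := by
    intro p hp
    by_cases hpB : p ∈ B
    · exact Or.inl (hB.1 hpB)
    · rw [← h.pol_basis_eq hX hB]
      exact Or.inr ⟨hD.1 hp, fun b hb => hD.2.1 hp (hBD hb) (ne_of_mem_of_not_mem hb hpB).symm⟩
  rw [← pol_union]
  refine ((h Y hY D hD).symm.trans_subset (pol_pol_mono hDsub)).antisymm ?_
  exact (pol_pol_mono (union_subset hXY inter_subset_left)).trans_eq hY

theorem IsOrthomodularSpace.isDaceySpace [Std.Symm r] [Std.Irrefl r] (h : IsOrthomodularSpace r) :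
    IsDaceySpace r := by
  intro X hX B hB
  have := h _ X (pol_pol_pol (pol r B)) hX (hX ▸ pol_pol_mono hB.1)
  rwa [pol_pol_pol, hB.inter_pol_eq_empty, pol_empty, inter_univ, eq_comm] at this

theorem isDaceySpace_iff_isOrthomodularSpace [Finite O] [Std.Symm r] [Std.Irrefl r] :
    IsDaceySpace r ↔ IsOrthomodularSpace r :=
  ⟨IsDaceySpace.isOrthomodularSpace, IsOrthomodularSpace.isDaceySpace⟩

variable {O' : Type*} {r' : O' → O' → Prop}

theorem pol_preimage (e : r ≃r r') (S : Set O') : pol r (e ⁻¹' S) = e ⁻¹' pol r' S := by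
  ext y
  simp only [pol, mem_preimage, mem_ofPred_eq, e.surjective.forall, e.map_rel_iff]

theorem pairwise_preimage (e : r ≃r r') {S : Set O'} :
    (e ⁻¹' S).Pairwise r ↔ S.Pairwise r' := by
  simp only [Set.Pairwise, mem_preimage, e.surjective.forall, e.injective.ne_iff, e.map_rel_iff]

theorem IsBasis.preimage (e : r ≃r r') {X B : Set O'} (hB : IsBasis r' X B) :
    IsBasis r (e ⁻¹' X) (e ⁻¹' B) := by
  refine ⟨preimage_mono hB.1, (pairwise_preimage e).2 hB.2.1, fun C hBC hCX hC => ?_⟩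
  obtain ⟨C, rfl⟩ : ∃ C', C = e ⁻¹' C' := ⟨e '' C, (e.injective.preimage_image C).symm⟩
  rw [e.surjective.preimage_subset_preimage_iff] at hBC hCX
  rw [hB.2.2 C hBC hCX ((pairwise_preimage e).1 hC)]

theorem IsDaceySpace.of_relIso (e : r ≃r r') (h : IsDaceySpace r) : IsDaceySpace r' := by
  intro X hX B hB
  have hX' : IsOC r (e ⁻¹' X) := by
    rw [IsOC, pol_preimage, pol_preimage, hX]
  have := h _ hX' _ (hB.preimage e)
  rw [pol_preimage, pol_preimage] at this
  exact preimage_injective.2 e.surjective this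

end OrthogonalitySpace

section Quotients

variable {P : Type*}

instance [PartialOrder P] : Std.Symm (perpQ (P := P)) := ⟨fun _ _ => Or.symm⟩

instance [PartialOrder P] : Std.Irrefl (perpQ (P := P)) :=
  ⟨fun p h => h.elim (not_le_of_gt p.2) (not_le_of_gt p.2)⟩

theorem leQ_trans [PartialOrder P] {p q s : Quot1 P} (hpq : leQ p q) (hqs : leQ q s) : leQ p s :=
  ⟨hqs.1.trans hpq.1, hpq.2.trans hqs.2⟩

theorem perpQ_of_leQ [PartialOrder P] {p p' q : Quot1 P} (h : leQ p p') (h' : perpQ p' q) :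
    perpQ p q :=
  h'.imp h.2.trans (·.trans h.1)

theorem IsOC.mem_of_leQ [PartialOrder P] {X : Set (Quot1 P)} (hX : IsOC perpQ X) {p q : Quot1 P}
    (h : leQ p q) (hq : q ∈ X) : p ∈ X := by
  rw [← hX]
  exact fun y hy => perpQ_of_leQ h (symm (hy q hq))

def Quot1.toDualRelIso [PartialOrder P] :
    (perpQ : Quot1 P → Quot1 P → Prop) ≃r (perpQ : Quot1 Pᵒᵈ → Quot1 Pᵒᵈ → Prop) where
  toFun p := ⟨(toDual p.1.2, toDual p.1.1), p.2⟩
  invFun p := ⟨(ofDual p.1.2, ofDual p.1.1), p.2⟩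
  left_inv _ := rfl
  right_inv _ := rfl
  map_rel_iff' := or_comm

end Quotients

section Lattice

variable {P : Type*}

def Quot1.join [Lattice P] (p q : Quot1 P) : Quot1 P :=
  ⟨(p.1.1 ⊓ q.1.1, p.1.2 ⊔ q.1.2), inf_le_left.trans_lt (p.2.trans_le le_sup_left)⟩

theorem Quot1.leQ_join_left [Lattice P] (p q : Quot1 P) : leQ p (p.join q) :=
  ⟨inf_le_left, le_sup_left⟩

theorem Quot1.leQ_join_right [Lattice P] (p q : Quot1 P) : leQ q (p.join q) :=
  ⟨inf_le_right, le_sup_right⟩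

theorem IsOC.join_mem [Lattice P] {X : Set (Quot1 P)} (hX : IsOC perpQ X) {p q : Quot1 P}
    (hp : p ∈ X) (hq : q ∈ X) (hpq : ¬ perpQ p q) : p.join q ∈ X := by
  rw [← hX]
  intro y hy
  rcases hy p hp with hyp | hpy <;> rcases hy q hq with hyq | hqy
  · exact Or.inr (le_inf hyp hyq)
  · exact absurd (Or.inr ((hqy.trans_lt y.2).le.trans hyp)) hpq
  · exact absurd (Or.inl ((hpy.trans_lt y.2).le.trans hyq)) hpq
  · exact Or.inl (sup_le hpy hqy)

theorem IsOC.exists_maximal_block [Lattice P] [Finite P] {X : Set (Quot1 P)} (hX : IsOC perpQ X)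
    {x : Quot1 P} (hx : x ∈ X) : ∃ m ∈ X, leQ x m ∧ ∀ p ∈ X, perpQ p m ∨ leQ p m := by
  obtain ⟨m, ⟨hmX, hxm⟩, hmax⟩ := (toFinite {m | m ∈ X ∧ leQ x m}).exists_maximalFor
    (fun p => (toDual p.1.1, p.1.2)) _ ⟨x, hx, le_rfl, le_rfl⟩
  refine ⟨m, hmX, hxm, fun p hp => or_iff_not_imp_left.2 fun hpm => ?_⟩
  have hjoin : leQ (p.join m) m := Prod.mk_le_mk.1 <| hmax
    ⟨hX.join_mem hp hmX hpm, leQ_trans hxm (p.leQ_join_right m)⟩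
    (Prod.mk_le_mk.2 (p.leQ_join_right m))
  exact leQ_trans (p.leQ_join_left m) hjoin

theorem exists_leQ_perpQ_of_not_perpQ [CompleteLattice P] {q m : Quot1 P} (hqm : ¬ perpQ q m)
    {S : Set (Quot1 P)} (hSm : ∀ p ∈ S, leQ p m) (hSq : ∀ p ∈ S, perpQ q p) :
    ∃ g : Quot1 P, leQ g m ∧ ∀ p ∈ S, perpQ g p := by
  obtain ⟨hqm₁, hqm₂⟩ := not_or.1 hqm
  set Lo := {p ∈ S | p.1.2 ≤ q.1.1}
  set Hi := {p ∈ S | q.1.2 ≤ p.1.1}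
  set G := m.1.1 ⊔ ⨆ p ∈ Lo, p.1.2
  set H := m.1.2 ⊓ ⨅ p ∈ Hi, p.1.1
  have hG : G = m.1.1 ∨ G ≤ q.1.1 := by
    rcases Lo.eq_empty_or_nonempty with hLo | ⟨p₀, hp₀⟩
    · simp [G, hLo]
    · exact Or.inr <|
        sup_le ((hSm p₀ hp₀.1).1.trans (p₀.2.le.trans hp₀.2)) (iSup₂_le fun p hp => hp.2)
  have hH : H = m.1.2 ∨ q.1.2 ≤ H := by
    rcases Hi.eq_empty_or_nonempty with hHi | ⟨p₀, hp₀⟩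
    · simp [H, hHi]
    · exact Or.inr <|
        le_inf (hp₀.2.trans (p₀.2.le.trans (hSm p₀ hp₀.1).2)) (le_iInf₂ fun p hp => hp.2)
  have hGH : G ≤ H := by
    refine sup_le (le_inf m.2.le (le_iInf₂ fun p hp => (hSm p hp.1).1)) (iSup₂_le fun p hp => ?_)
    exact le_inf (hSm p hp.1).2 (le_iInf₂ fun p' hp' => hp.2.trans (q.2.le.trans hp'.2))
  have hHG : ¬ H ≤ G := by
    rcases hG with hG | hG <;> rcases hH with hH | hH
    · rw [hG, hH]; exact not_le_of_gt m.2
    · rw [hG]; exact fun h => hqm₁ (hH.trans h)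
    · rw [hH]; exact fun h => hqm₂ (h.trans hG)
    · exact fun h => not_le_of_gt q.2 (hH.trans (h.trans hG))
  refine ⟨⟨(G, H), lt_of_le_not_ge hGH hHG⟩, ⟨le_sup_left, inf_le_left⟩, fun p hp => ?_⟩
  rcases hSq p hp with h | h
  · exact Or.inl (inf_le_right.trans (iInf₂_le p ⟨hp, h⟩))
  · exact Or.inr <|
      (le_biSup (fun p : Quot1 P => p.1.2) (show p ∈ Lo from ⟨hp, h⟩)).trans le_sup_right

theorem isDaceySpace_of_completeLattice [CompleteLattice P] [Finite P] :
    IsDaceySpace (perpQ (P := P)) := by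
  intro X hX B hB
  suffices h : pol perpQ B ⊆ pol perpQ X by
    rw [h.antisymm (pol_antitone hB.1), hX]
  intro q hq x hx
  obtain ⟨m, hmX, hxm, hm⟩ := hX.exists_maximal_block hx
  suffices hqm : perpQ q m from symm (perpQ_of_leQ hxm (symm hqm))
  by_contra hqm
  obtain ⟨g, hgm, hg⟩ := exists_leQ_perpQ_of_not_perpQ hqm (S := {p ∈ B | leQ p m})
    (fun p hp => hp.2) (fun p hp => hq p hp.1)
  have hgB : g ∈ pol perpQ B := fun p hp =>
    (hm p (hB.1 hp)).elim (fun h => perpQ_of_leQ hgm (symm h)) (fun h => hg p ⟨hp, h⟩)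
  exact (hB.inter_pol_eq_empty.subset ⟨hX.mem_of_leQ hgm hmX, hgB⟩ : g ∈ (∅ : Set _))

end Lattice

section BoundedOrder

variable {P : Type*} [PartialOrder P]

theorem isOC_tau_lowerBounds [OrderTop P] (U : Set P) : IsOC perpQ (tau (lowerBounds U)) := by
  refine Subset.antisymm (fun z hz e he => ?_) (subset_pol_pol _)
  rcases (le_top : e ≤ ⊤).eq_or_lt with rfl | he_top
  · exact le_top
  rcases hz ⟨(e, ⊤), he_top⟩ fun x hx => Or.inr (hx he) with h | h
  · exact h
  · exact absurd (z.2.trans_le le_top) (not_lt_of_ge h)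

theorem exists_tops_le [OrderBot P] [Finite P] {B : Set (Quot1 P)} (hB : B.Pairwise perpQ) :
    ∃ t ∈ insert ⊥ ((fun p => p.1.2) '' B), ∀ p ∈ B, p.1.2 ≤ t := by
  obtain ⟨t, ht, hmax⟩ := (toFinite (insert ⊥ ((fun p : Quot1 P => p.1.2) '' B))).exists_maximal
    (insert_nonempty _ _)
  refine ⟨t, ht, fun p hp => ?_⟩
  by_cases htp : t ≤ p.1.2
  · exact hmax (mem_insert_of_mem _ ⟨p, hp, rfl⟩) htp
  rcases ht with rfl | ⟨p₀, hp₀, rfl⟩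
  · exact absurd bot_le htp
  rcases eq_or_ne p p₀ with rfl | hne
  · exact le_rfl
  rcases hB hp hp₀ hne with h | h
  · exact h.trans p₀.2.le
  · exact absurd (h.trans p.2.le) htp

theorem IsDaceySpace.exists_isLUB [BoundedOrder P] [Finite P] (h : IsDaceySpace (perpQ (P := P)))
    (a b : P) : ∃ s, IsLUB {a, b} s := by
  set L := lowerBounds (upperBounds {a, b})
  have hX := isOC_tau_lowerBounds (upperBounds {a, b})
  obtain ⟨B, -, hB⟩ :=
    exists_isBasis_superset (r := perpQ) (empty_subset (tau L)) (pairwise_empty _)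
  obtain ⟨t, htB, ht⟩ := exists_tops_le hB.2.1
  have htL : t ∈ L := by
    rcases htB with rfl | ⟨p, hp, rfl⟩
    · exact fun _ _ => bot_le
    · exact hB.1 hp
  refine ⟨t, fun c hc => ?_, htL⟩
  rcases (le_top : t ≤ ⊤).eq_or_lt with rfl | ht_top
  · exact le_top
  have hperp : (⟨(t, ⊤), ht_top⟩ : Quot1 P) ∈ pol perpQ (tau L) :=
    h.pol_basis_eq hX hB ▸ fun p hp => Or.inr (ht p hp)
  rcases eq_bot_or_bot_lt c with rfl | hc_bot
  · exact bot_le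
  rcases hperp ⟨(⊥, c), hc_bot⟩ (subset_lowerBounds_upperBounds _ hc) with h | h
  · exact absurd (ht_top.trans_le (h.trans bot_le)) (lt_irrefl _)
  · exact h

theorem IsDaceySpace.exists_isGLB [BoundedOrder P] [Finite P] (h : IsDaceySpace (perpQ (P := P)))
    (a b : P) : ∃ i, IsGLB {a, b} i :=
  (h.of_relIso Quot1.toDualRelIso).exists_isLUB (toDual a) (toDual b)

end BoundedOrder

theorem lattice_iff_dacey_iff_orthomodular {P : Type*} [PartialOrder P] [BoundedOrder P]
    [Fintype P] :
    ((∀ a b : P, (∃ s, IsLUB {a, b} s) ∧ (∃ i, IsGLB {a, b} i)) ↔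
      (∀ X : Set (Quot1 P), IsOC perpQ X →
        ∀ B : Set (Quot1 P), IsBasis perpQ X B → pol perpQ (pol perpQ B) = X)) ∧
    ((∀ a b : P, (∃ s, IsLUB {a, b} s) ∧ (∃ i, IsGLB {a, b} i)) ↔
      (∀ X Y : Set (Quot1 P), IsOC perpQ X → IsOC perpQ Y → X ⊆ Y →
        Y = pol perpQ (pol perpQ X ∩ pol perpQ (Y ∩ pol perpQ X)))) := by
  have lattice_iff_dacey : (∀ a b : P, (∃ s, IsLUB {a, b} s) ∧ (∃ i, IsGLB {a, b} i)) ↔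
      IsDaceySpace (perpQ (P := P)) := by
    refine ⟨fun h => ?_, fun h a b => ⟨h.exists_isLUB a b, h.exists_isGLB a b⟩⟩
    choose sup hsup using fun a b => (h a b).1
    choose inf hinf using fun a b => (h a b).2
    let _ := Lattice.ofIsLUBofIsGLB sup inf hsup hinf
    let _ := Fintype.toCompleteLattice P
    exact isDaceySpace_of_completeLattice
  exact ⟨lattice_iff_dacey, lattice_iff_dacey.trans isDaceySpace_iff_isOrthomodularSpace⟩
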